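/- arXiv:q-alg/9703011 — 6 statements merged into one kernel-verified Lean document; each statement's English description precedes it below -/
import Mathlib

section
/- For every positive integer k, the sum over n from 1 to k of (-1)^n * (1/2)_n / n! * binomial(k-1, n-1) equals -(1/2^(2k-1)) * (2k-2)! / (k! * (k-1)!), where (1/2)_n denotes the Pochhammer symbol (rising factorial) of 1/2. -/
open Finset

private noncomputable def Ph (n : ℕ) : ℚ := (ascPochhammer ℚ n).eval (1/2)

private lemma Ph_zero : Ph 0 = 1 := by simp [Ph]

private lemma Ph_succ (n : ℕ) : Ph (n+1) = Ph n * (1/2 + n) := by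
  simp [Ph, ascPochhammer_succ_right]

private lemma key (m : ℕ) : ∀ r : ℕ,
    ∑ n ∈ range (m+1), (-1:ℚ)^n * (m.choose n) * (Ph (n+r) / ((n+r).factorial : ℚ))
      = Ph r * Ph m / (((r+m).factorial : ℚ)) := by
  induction m with
  | zero => intro r; simp [Ph_zero]
  | succ m ih =>
    intro r
    have hG : ∑ n ∈ range (m+2), (-1:ℚ)^n * (m.choose n) * (Ph (n+r) / ((n+r).factorial : ℚ))
        = Ph r * Ph m / (((r+m).factorial : ℚ)) := by
      rw [Finset.sum_range_succ, ih r]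
      simp [Nat.choose_succ_self]
    rw [Finset.sum_range_succ'] at hG ⊢
    have hc : ∀ n, ((m+1).choose (n+1) : ℚ) = (m.choose n : ℚ) + (m.choose (n+1) : ℚ) := by
      intro n; rw [Nat.choose_succ_succ]; push_cast; ring
    have hsplit : ∑ n ∈ range (m+1), (-1:ℚ)^(n+1) * ((m+1).choose (n+1)) * (Ph (n+1+r) / ((n+1+r).factorial : ℚ))
        = (∑ n ∈ range (m+1), (-1:ℚ)^(n+1) * (m.choose n) * (Ph (n+1+r) / ((n+1+r).factorial : ℚ)))
        + ∑ n ∈ range (m+1), (-1:ℚ)^(n+1) * (m.choose (n+1)) * (Ph (n+1+r) / ((n+1+r).factorial : ℚ)) := by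
      rw [← Finset.sum_add_distrib]
      refine Finset.sum_congr rfl fun n _ => ?_
      rw [hc]; ring
    rw [hsplit]
    have hA : ∑ n ∈ range (m+1), (-1:ℚ)^(n+1) * (m.choose n) * (Ph (n+1+r) / ((n+1+r).factorial : ℚ))
        = -(Ph (r+1) * Ph m / (((r+1+m).factorial : ℚ))) := by
      rw [← ih (r+1)]
      rw [← Finset.sum_neg_distrib]
      refine Finset.sum_congr rfl fun n _ => ?_
      have : n+1+r = n+(r+1) := by omega
      rw [this]; ring
    have hB : ∑ n ∈ range (m+1), (-1:ℚ)^(n+1) * (m.choose (n+1)) * (Ph (n+1+r) / ((n+1+r).factorial : ℚ))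
        = Ph r * Ph m / (((r+m).factorial : ℚ))
          - (-1:ℚ)^0 * (m.choose 0) * (Ph (0+r) / ((0+r).factorial : ℚ)) := by
      rw [← hG]; ring
    rw [hA, hB]
    simp only [pow_zero, Nat.choose_zero_right, Nat.cast_one, zero_add, one_mul]
    rw [Ph_succ r, Ph_succ m]
    have hfac : (((r+(m+1)).factorial : ℚ)) = ((r+m+1 : ℕ) : ℚ) * ((r+m).factorial : ℚ) := by
      have : r+(m+1) = (r+m)+1 := by omega
      rw [this, Nat.factorial_succ]; push_cast; ring
    have hfac2 : (((r+1+m).factorial : ℚ)) = ((r+m+1 : ℕ) : ℚ) * ((r+m).factorial : ℚ) := by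
      have : r+1+m = (r+m)+1 := by omega
      rw [this, Nat.factorial_succ]; push_cast; ring
    rw [hfac, hfac2]
    have h1 : ((r+m).factorial : ℚ) ≠ 0 := by exact_mod_cast (Nat.factorial_pos _).ne'
    have h2 : ((r+m+1 : ℕ) : ℚ) ≠ 0 := by positivity
    field_simp
    push_cast
    ring

private lemma Ph_eq (m : ℕ) : Ph m = ((2*m).factorial : ℚ) / (4^m * (m.factorial : ℚ)) := by
  induction m with
  | zero => simp [Ph_zero]
  | succ m ih =>
    rw [Ph_succ, ih]
    have h1 : 2*(m+1) = (2*m+1)+1 := by omega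
    rw [h1, Nat.factorial_succ, Nat.factorial_succ, Nat.factorial_succ]
    have hf : ((2*m).factorial : ℚ) ≠ 0 := by exact_mod_cast (Nat.factorial_pos _).ne'
    have hm : ((m).factorial : ℚ) ≠ 0 := by exact_mod_cast (Nat.factorial_pos _).ne'
    have h4 : (4:ℚ)^m ≠ 0 := by positivity
    field_simp
    push_cast
    ring

theorem stmt0 (k : ℕ) (hk : 0 < k) :
    ∑ n ∈ Finset.Icc 1 k,
      (-1 : ℚ) ^ n * (ascPochhammer ℚ n).eval (1/2 : ℚ) / (Nat.factorial n : ℚ)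
        * (Nat.choose (k - 1) (n - 1) : ℚ) =
    -(1 / 2 ^ (2 * k - 1)) * (Nat.factorial (2 * k - 2) : ℚ)
      / ((Nat.factorial k : ℚ) * (Nat.factorial (k - 1) : ℚ)) := by
  obtain ⟨m, rfl⟩ : ∃ m, k = m + 1 := ⟨k-1, (Nat.succ_pred_eq_of_pos hk).symm⟩
  have hIcc : ∑ n ∈ Finset.Icc 1 (m+1),
      (-1 : ℚ) ^ n * (ascPochhammer ℚ n).eval (1/2 : ℚ) / (Nat.factorial n : ℚ)
        * (Nat.choose (m+1 - 1) (n - 1) : ℚ)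
      = ∑ j ∈ range (m+2-1),
      (-1 : ℚ) ^ (1+j) * (ascPochhammer ℚ (1+j)).eval (1/2 : ℚ) / (Nat.factorial (1+j) : ℚ)
        * (Nat.choose (m+1 - 1) (1+j - 1) : ℚ) := by
    rw [← Finset.Ico_add_one_right_eq_Icc, Finset.sum_Ico_eq_sum_range]; rfl
  rw [hIcc]
  have hr : m+2-1 = m+1 := by omega
  rw [hr]
  have hsum : ∑ j ∈ range (m+1),
      (-1 : ℚ) ^ (1+j) * (ascPochhammer ℚ (1+j)).eval (1/2 : ℚ) / (Nat.factorial (1+j) : ℚ)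
        * (Nat.choose (m+1 - 1) (1+j - 1) : ℚ)
      = -∑ n ∈ range (m+1), (-1:ℚ)^n * (m.choose n) * (Ph (n+1) / ((n+1).factorial : ℚ)) := by
    rw [← Finset.sum_neg_distrib]
    refine Finset.sum_congr rfl fun j _ => ?_
    have e1 : 1+j-1 = j := by omega
    have e2 : m+1-1 = m := by omega
    have e3 : 1+j = j+1 := by omega
    rw [e1, e2, e3]
    show (-1:ℚ)^(j+1) * Ph (j+1) / _ * _ = _
    ring
  rw [hsum, key m 1]
  have e4 : m+1-1 = m := by omega
  have e5 : 2*(m+1)-2 = 2*m := by omega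
  have e6 : 2*(m+1)-1 = 2*m+1 := by omega
  rw [e4, e5, e6, Ph_eq m]
  have hP1 : Ph 1 = 1/2 := by rw [Ph_succ, Ph_zero]; norm_num
  rw [hP1]
  have hf : ((2*m).factorial : ℚ) ≠ 0 := by exact_mod_cast (Nat.factorial_pos _).ne'
  have hm : ((m).factorial : ℚ) ≠ 0 := by exact_mod_cast (Nat.factorial_pos _).ne'
  have hm1 : (((1+m).factorial : ℚ)) ≠ 0 := by exact_mod_cast (Nat.factorial_pos _).ne'
  have hm1' : (((m+1).factorial : ℚ)) ≠ 0 := by exact_mod_cast (Nat.factorial_pos _).ne'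
  have hpow : (2:ℚ)^(2*m+1) = 2 * 4^m := by
    rw [pow_succ, pow_mul]; norm_num; ring
  have e7 : 1+m = m+1 := by omega
  rw [e7, hpow]
  field_simp
end

section
/- For every integer s ≥ 2, the sum over k from 1 to s-1 of t_k * t_{s-k} * k, where t_k = (2k-2)!/(k!(k-1)!), equals (2s-2)!/(2*((s-1)!)^2). -/
/-- `t k = (2k-2)! / (k! (k-1)!)` as a rational number. -/
def tcoef (k : ℕ) : ℚ :=
  (Nat.factorial (2 * k - 2) : ℚ) / ((Nat.factorial k : ℚ) * (Nat.factorial (k - 1) : ℚ))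

lemma cat_fact (n : ℕ) :
    (catalan n) * n.factorial * (n + 1).factorial = (2 * n).factorial := by
  have h1 := succ_mul_catalan_eq_centralBinom n
  have h2 := Nat.choose_mul_factorial_mul_factorial (show n ≤ 2 * n by omega)
  rw [show 2 * n - n = n by omega] at h2
  rw [Nat.centralBinom] at h1
  calc catalan n * n.factorial * (n + 1).factorial
      = ((n + 1) * catalan n) * n.factorial * n.factorial := by
        rw [Nat.factorial_succ]; ring
    _ = (2 * n).factorial := by rw [h1, h2]

lemma tcoef_succ (j : ℕ) : tcoef (j + 1) = (catalan j : ℚ) := by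
  unfold tcoef
  rw [show 2 * (j + 1) - 2 = 2 * j by omega, Nat.add_sub_cancel]
  rw [div_eq_iff (by positivity)]
  have h := cat_fact j
  push_cast [← h]
  ring

lemma cat_sum (n : ℕ) :
    ∑ i ∈ Finset.range (n + 1), (catalan i : ℚ) * (catalan (n - i) : ℚ) =
      (catalan (n + 1) : ℚ) := by
  rw [catalan_succ n]
  push_cast [Fin.sum_univ_eq_sum_range (fun i => (catalan i : ℚ) * (catalan (n - i) : ℚ))]
  rfl

theorem stmt2 (s : ℕ) (hs : 2 ≤ s) :
    ∑ k ∈ Finset.Icc 1 (s - 1), tcoef k * tcoef (s - k) * (k : ℚ) =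
      (Nat.factorial (2 * s - 2) : ℚ) / (2 * (Nat.factorial (s - 1) : ℚ) ^ 2) := by
  obtain ⟨n, rfl⟩ : ∃ n, s = n + 2 := ⟨s - 2, by omega⟩
  rw [show n + 2 - 1 = n + 1 by omega, show 2 * (n + 2) - 2 = 2 * (n + 1) by omega]
  rw [show Finset.Icc 1 (n + 1) = Finset.Ico 1 (n + 2) by
    rw [← Finset.Ico_add_one_right_eq_Icc]; rfl, Finset.sum_Ico_eq_sum_range]
  rw [show n + 2 - 1 = n + 1 by omega]
  have hL : ∑ i ∈ Finset.range (n + 1), tcoef (1 + i) * tcoef (n + 2 - (1 + i)) * ((1 + i : ℕ) : ℚ)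
      = ∑ i ∈ Finset.range (n + 1),
        (catalan i : ℚ) * (catalan (n - i) : ℚ) * ((1 + i : ℕ) : ℚ) := by
    apply Finset.sum_congr rfl
    intro i hi
    have hi' : i ≤ n := by simpa using Nat.lt_succ_iff.mp (Finset.mem_range.mp hi)
    rw [show 1 + i = i + 1 by ring, show n + 2 - (i + 1) = (n - i) + 1 by omega,
      tcoef_succ, tcoef_succ]
  rw [hL]
  have key : (2 : ℚ) * ∑ i ∈ Finset.range (n + 1),
      (catalan i : ℚ) * (catalan (n - i) : ℚ) * ((1 + i : ℕ) : ℚ)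
      = ((n : ℚ) + 2) * (catalan (n + 1) : ℚ) := by
    have hrefl := Finset.sum_range_reflect
      (fun i => (catalan i : ℚ) * (catalan (n - i) : ℚ) * ((1 + i : ℕ) : ℚ)) (n + 1)
    have hrefl2 : ∑ i ∈ Finset.range (n + 1),
        (catalan (n - i) : ℚ) * (catalan i : ℚ) * ((1 + (n - i) : ℕ) : ℚ)
        = ∑ i ∈ Finset.range (n + 1),
        (catalan i : ℚ) * (catalan (n - i) : ℚ) * ((1 + i : ℕ) : ℚ) := by
      rw [← hrefl]
      apply Finset.sum_congr rfl
      intro i hi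
      have hi' : i ≤ n := Nat.lt_succ_iff.mp (Finset.mem_range.mp hi)
      rw [show n + 1 - 1 - i = n - i by omega, show n - (n - i) = i by omega]
    rw [two_mul]
    nth_rewrite 1 [← hrefl2]
    rw [← Finset.sum_add_distrib, ← cat_sum n, Finset.mul_sum]
    apply Finset.sum_congr rfl
    intro i hi
    have hi' : i ≤ n := Nat.lt_succ_iff.mp (Finset.mem_range.mp hi)
    have hc : ((1 + (n - i) : ℕ) : ℚ) + ((1 + i : ℕ) : ℚ) = (n : ℚ) + 2 := by
      push_cast [Nat.cast_sub hi']
      ring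
    calc (catalan (n - i) : ℚ) * (catalan i : ℚ) * ((1 + (n - i) : ℕ) : ℚ)
          + (catalan i : ℚ) * (catalan (n - i) : ℚ) * ((1 + i : ℕ) : ℚ)
        = (catalan i : ℚ) * (catalan (n - i) : ℚ)
            * (((1 + (n - i) : ℕ) : ℚ) + ((1 + i : ℕ) : ℚ)) := by ring
      _ = ((n : ℚ) + 2) * ((catalan i : ℚ) * (catalan (n - i) : ℚ)) := by rw [hc]; ring
  have hR : ((Nat.factorial (2 * (n + 1)) : ℚ)) / (2 * (Nat.factorial (n + 1) : ℚ) ^ 2)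
      = ((n : ℚ) + 2) * (catalan (n + 1) : ℚ) / 2 := by
    rw [div_eq_div_iff (by positivity) (by norm_num)]
    have h := cat_fact (n + 1)
    rw [show 2 * (n + 1) = 2 * n + 2 by ring] at h ⊢
    rw [Nat.factorial_succ (n + 1)] at h
    push_cast [← h]
    ring
  rw [hR]
  linarith [key]
end

section
/- Define the hypergeometric term F(k,n) = (-1)^n (1/2)_n / n! * binomial(k-1, n-1) and f(k) = sum over n from 1 to k of F(k,n). Then f satisfies the first-order recurrence 2(k+1) f(k+1) = (2k-1) f(k) for all k ≥ 1, with f(1) = -1/2. -/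
open Finset

noncomputable def P (n : ℕ) : ℚ := (ascPochhammer ℚ n).eval (1/2 : ℚ)

noncomputable def Fterm (k n : ℕ) : ℚ :=
  (-1 : ℚ) ^ n * P n / (Nat.factorial n : ℚ) * (Nat.choose (k - 1) (n - 1) : ℚ)

noncomputable def Gt (k m : ℕ) : ℚ :=
  (-1 : ℚ) ^ m * 2 * m * P (m+1) / (Nat.factorial m : ℚ) * (Nat.choose k m : ℚ) / k

lemma choose_q (k m : ℕ) :
    ((m:ℚ)+1) * (Nat.choose k (m+1) : ℚ) = ((k:ℚ) - m) * (Nat.choose k m : ℚ) := by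
  rcases le_or_gt m k with h | h
  · have h1 := Nat.choose_succ_right_eq k m
    have h2 : ((Nat.choose k (m+1) * (m+1) : ℕ) : ℚ) = ((Nat.choose k m * (k - m) : ℕ) : ℚ) :=
      congrArg _ h1
    push_cast [Nat.cast_sub h] at h2
    linarith
  · rw [Nat.choose_eq_zero_of_lt h, Nat.choose_eq_zero_of_lt (h.trans (Nat.lt_succ_self m))]
    ring

lemma binid (k m : ℕ) (hk : 1 ≤ k) :
    2*(k:ℚ)*((k:ℚ)+1)*(Nat.choose k m : ℚ) - (k:ℚ)*(2*(k:ℚ)-1)*(Nat.choose (k-1) m : ℚ)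
      = ((m:ℚ)+1)*(2*(m:ℚ)+3)*(Nat.choose k (m+1) : ℚ) + 2*(m:ℚ)*((m:ℚ)+1)*(Nat.choose k m : ℚ) := by
  have h1n := Nat.add_one_mul_choose_eq (k-1) m
  rw [Nat.sub_add_cancel hk] at h1n
  have h1 : (k:ℚ) * (Nat.choose (k-1) m : ℚ) = (Nat.choose k (m+1) : ℚ) * ((m:ℚ)+1) := by
    exact_mod_cast congrArg (Nat.cast : ℕ → ℚ) h1n
  have h2 := choose_q k m
  linear_combination (-(2*(k:ℚ)-1))*h1 - (2*(k:ℚ)+2*(m:ℚ)+2)*h2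

lemma key_s5 (k m : ℕ) (hk : 1 ≤ k) :
    2*((k:ℚ)+1) * Fterm (k+1) (m+1) - (2*(k:ℚ)-1) * Fterm k (m+1)
      = Gt k (m+1) - Gt k m := by
  have hP : P (m+1+1) = P (m+1) * (1/2 + ((m:ℚ)+1)) := by
    unfold P; rw [ascPochhammer_succ_eval]; push_cast; ring
  have hb := binid k m hk
  unfold Fterm Gt
  simp only [Nat.add_sub_cancel, hP, Nat.factorial_succ]
  push_cast
  have hm : (Nat.factorial m : ℚ) ≠ 0 := Nat.cast_ne_zero.mpr (Nat.factorial_ne_zero m)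
  have hk0 : (k:ℚ) ≠ 0 := Nat.cast_ne_zero.mpr (by omega)
  have hm1 : ((m:ℚ)+1) ≠ 0 := by positivity
  field_simp
  linear_combination ((-1:ℚ)^(m+1) * P (m+1)) * hb

lemma tele (g : ℕ → ℚ) : ∀ k : ℕ, ∑ n ∈ Finset.Icc 1 (k+1), (g n - g (n-1)) = g (k+1) - g 0
  | 0 => by simp
  | (k+1) => by
      rw [Finset.sum_Icc_succ_top (by omega), tele g k]
      simp

/-- `f k = ∑_{n=1}^{k} (-1)^n (1/2)_n / n! * C(k-1, n-1)`. -/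
noncomputable def fsum (k : ℕ) : ℚ :=
  ∑ n ∈ Finset.Icc 1 k,
    (-1 : ℚ) ^ n * (ascPochhammer ℚ n).eval (1/2 : ℚ) / (Nat.factorial n : ℚ)
      * (Nat.choose (k - 1) (n - 1) : ℚ)

theorem stmt5 :
    (∀ k : ℕ, 1 ≤ k → 2 * ((k : ℚ) + 1) * fsum (k + 1) = (2 * (k : ℚ) - 1) * fsum k) ∧
      fsum 1 = -1/2 := by
  constructor
  · intro k hk
    have h1 : fsum (k+1) = ∑ n ∈ Finset.Icc 1 (k+1), Fterm (k+1) n := rfl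
    have h2 : fsum k = ∑ n ∈ Finset.Icc 1 (k+1), Fterm k n := by
      rw [show fsum k = ∑ n ∈ Finset.Icc 1 k, Fterm k n from rfl,
        Finset.sum_Icc_succ_top (by omega)]
      have hz : Fterm k (k+1) = 0 := by
        unfold Fterm
        rw [Nat.add_sub_cancel, Nat.choose_eq_zero_of_lt (by omega)]
        simp
      rw [hz, add_zero]
    have hsum : ∑ n ∈ Finset.Icc 1 (k+1),
        (2*((k:ℚ)+1) * Fterm (k+1) n - (2*(k:ℚ)-1) * Fterm k n) = 0 := by
      calc ∑ n ∈ Finset.Icc 1 (k+1), (2*((k:ℚ)+1) * Fterm (k+1) n - (2*(k:ℚ)-1) * Fterm k n)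
          = ∑ n ∈ Finset.Icc 1 (k+1), (Gt k n - Gt k (n-1)) := by
            refine Finset.sum_congr rfl ?_
            intro n hn
            simp only [Finset.mem_Icc] at hn
            obtain ⟨m, rfl⟩ : ∃ m, n = m+1 := ⟨n-1, by omega⟩
            simpa using key_s5 k m hk
        _ = Gt k (k+1) - Gt k 0 := tele (Gt k) k
        _ = 0 := by simp [Gt, Nat.choose_succ_self]
    rw [Finset.sum_sub_distrib, ← Finset.mul_sum, ← Finset.mul_sum, sub_eq_zero] at hsum
    rw [h1, h2, hsum]
  · show ∑ n ∈ Finset.Icc 1 1, _ = _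
    rw [Finset.Icc_self, Finset.sum_singleton]
    norm_num [ascPochhammer_one]
end

section
/- Define f_1(s) = sum over k from 1 to s-1 of t_k t_{s-k} k, with t_k = (2k-2)!/(k!(k-1)!). Then for all integers s ≥ 2, 4(s-1) f_1(s) - s f_1(s+1) + (2s-2)!/((s-1)!)^2 = 0. -/
/-- `f₁ s = ∑_{k=1}^{s-1} t_k t_{s-k} k`. -/
def f1 (s : ℕ) : ℚ := ∑ k ∈ Finset.Icc 1 (s - 1), tcoef k * tcoef (s - k) * (k : ℚ)

lemma catalan_rat (n : ℕ) :
    (catalan n : ℚ) = (Nat.factorial (2 * n) : ℚ) /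
      ((Nat.factorial (n + 1) : ℚ) * (Nat.factorial n : ℚ)) := by
  have h1 : (n + 1) * catalan n = Nat.centralBinom n :=
    succ_mul_catalan_eq_centralBinom n
  have h2 : Nat.centralBinom n * (Nat.factorial n * Nat.factorial n) = Nat.factorial (2 * n) := by
    have := Nat.choose_mul_factorial_mul_factorial (Nat.le_mul_of_pos_left n (by norm_num) : n ≤ 2 * n)
    rw [Nat.centralBinom_eq_two_mul_choose]
    have h3 : 2 * n - n = n := by omega
    rw [h3] at this
    linarith [this]
  have hf : (Nat.factorial (n + 1) : ℚ) = (n + 1) * Nat.factorial n := by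
    rw [Nat.factorial_succ]; push_cast; ring
  rw [hf]
  have hpos : ((Nat.factorial n : ℚ)) ≠ 0 := by positivity
  have hpos2 : ((n : ℚ) + 1) ≠ 0 := by positivity
  field_simp
  have := congrArg (Nat.cast : ℕ → ℚ) h2
  push_cast at this
  have h1' := congrArg (Nat.cast : ℕ → ℚ) h1
  push_cast at h1'
  nlinarith [this, h1']

lemma tcoef_eq (k : ℕ) (hk : 1 ≤ k) : tcoef k = (catalan (k - 1) : ℚ) := by
  obtain ⟨n, rfl⟩ : ∃ n, k = n + 1 := ⟨k - 1, by omega⟩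
  rw [catalan_rat]
  unfold tcoef
  have h1 : 2 * (n + 1) - 2 = 2 * n := by omega
  simp [h1]

lemma f1_eq (s : ℕ) (hs : 2 ≤ s) : f1 s = (Nat.centralBinom (s - 1) : ℚ) / 2 := by
  -- first: convolution sum equals catalan (s-1)
  have hconv : ∑ k ∈ Finset.Icc 1 (s - 1), tcoef k * tcoef (s - k)
      = (catalan (s - 1) : ℚ) := by
    have hs1 : s - 1 = (s - 2) + 1 := by omega
    rw [show Finset.Icc 1 (s-1) = Finset.map ⟨fun i => i + 1, add_left_injective 1⟩
        (Finset.range (s - 1)) by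
      ext x
      simp only [Finset.mem_Icc, Finset.mem_map, Finset.mem_range, Function.Embedding.coeFn_mk]
      constructor
      · intro h; exact ⟨x - 1, by omega, by omega⟩
      · rintro ⟨a, ha, rfl⟩; omega]
    rw [Finset.sum_map]
    simp only [Function.Embedding.coeFn_mk]
    rw [hs1, catalan_succ]
    rw [Fin.sum_univ_eq_sum_range (fun i => catalan i * catalan (s - 2 - i)) (s - 2 + 1)]
    push_cast
    apply Finset.sum_congr rfl
    intro i hi
    simp only [Finset.mem_range] at hi
    rw [tcoef_eq (i + 1) (by omega), tcoef_eq (s - (i + 1)) (by omega)]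
    have : i + 1 - 1 = i := by omega
    have h2 : s - (i + 1) - 1 = s - 2 - i := by omega
    rw [this, h2]
  -- symmetry: f1 s also equals the reflected sum
  have hsym : f1 s = ∑ k ∈ Finset.Icc 1 (s - 1), tcoef k * tcoef (s - k) * ((s : ℚ) - k) := by
    unfold f1
    refine Finset.sum_nbij' (fun k => s - k) (fun k => s - k) ?_ ?_ ?_ ?_ ?_
    · intro a ha; simp only [Finset.mem_Icc] at ha ⊢; omega
    · intro a ha; simp only [Finset.mem_Icc] at ha ⊢; omega
    · intro a ha; simp only [Finset.mem_Icc] at ha; show s - (s - a) = a; omega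
    · intro a ha; simp only [Finset.mem_Icc] at ha; show s - (s - a) = a; omega
    · intro a ha
      simp only [Finset.mem_Icc] at ha
      have h1 : s - (s - a) = a := by omega
      rw [h1]
      have h2 : ((s - a : ℕ) : ℚ) = (s : ℚ) - a := by
        push_cast [Nat.cast_sub (by omega : a ≤ s)]; ring
      rw [h2]; ring
  have h2 : 2 * f1 s = (s : ℚ) * catalan (s - 1) := by
    have : 2 * f1 s = f1 s + f1 s := by ring
    rw [this]
    nth_rewrite 1 [f1]
    rw [hsym, ← Finset.sum_add_distrib, ← hconv, Finset.mul_sum]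
    apply Finset.sum_congr rfl
    intro k _; ring
  have h3 : (s : ℚ) * catalan (s - 1) = Nat.centralBinom (s - 1) := by
    have := succ_mul_catalan_eq_centralBinom (s - 1)
    have h' := congrArg (Nat.cast : ℕ → ℚ) this
    push_cast at h'
    have : ((s - 1 : ℕ) : ℚ) + 1 = (s : ℚ) := by
      push_cast [Nat.cast_sub (by omega : 1 ≤ s)]; ring
    rw [this] at h'
    exact h'
  linarith [h2, h3]

theorem stmt7 (s : ℕ) (hs : 2 ≤ s) :
    4 * ((s : ℚ) - 1) * f1 s - (s : ℚ) * f1 (s + 1)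
      + (Nat.factorial (2 * s - 2) : ℚ) / ((Nat.factorial (s - 1) : ℚ)) ^ 2 = 0 := by
  rw [f1_eq s hs, f1_eq (s + 1) (by omega)]
  have hss : s + 1 - 1 = s := by omega
  rw [hss]
  -- factorial term equals centralBinom (s-1)
  have hfac : (Nat.factorial (2 * s - 2) : ℚ) / ((Nat.factorial (s - 1) : ℚ)) ^ 2
      = (Nat.centralBinom (s - 1) : ℚ) := by
    have h2 : Nat.centralBinom (s-1) * (Nat.factorial (s-1) * Nat.factorial (s-1))
        = Nat.factorial (2 * (s-1)) := by
      have := Nat.choose_mul_factorial_mul_factorial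
        (Nat.le_mul_of_pos_left (s-1) (by norm_num) : s - 1 ≤ 2 * (s-1))
      rw [Nat.centralBinom_eq_two_mul_choose]
      have h3 : 2 * (s-1) - (s-1) = s - 1 := by omega
      rw [h3] at this
      linarith [this]
    have h4 : 2 * s - 2 = 2 * (s - 1) := by omega
    rw [h4]
    have h' := congrArg (Nat.cast : ℕ → ℚ) h2
    push_cast at h'
    have hpos : ((Nat.factorial (s-1) : ℚ)) ≠ 0 := by positivity
    field_simp
    linarith [h']
  rw [hfac]
  -- central binom recurrence
  have hrec := Nat.succ_mul_centralBinom_succ (s - 1)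
  have h5 : s - 1 + 1 = s := by omega
  rw [h5] at hrec
  have h' := congrArg (Nat.cast : ℕ → ℚ) hrec
  push_cast at h'
  have hc : ((s - 1 : ℕ) : ℚ) = (s : ℚ) - 1 := by
    push_cast [Nat.cast_sub (by omega : 1 ≤ s)]; ring
  rw [hc] at h'
  -- h' : ((s:ℚ)-1+1) * centralBinom s = 2*(2*((s:ℚ)-1)+1)*centralBinom (s-1)
  have hs2 : (2 : ℚ) ≤ s := by exact_mod_cast hs
  nlinarith [h']
end

section
/- Let m1, m2 be rationals with 2m1 + k ≠ 0, and define b(k,l) = (-2m1-k)_l (-2m2-l)_k / (k! l!) for k,l ≥ 0 and b(k,l) = 0 if k < 0 or l < 0. Then for all integers k ≥ 0 and l ≥ 1, the telescoping identity holds: sum over n from 1 to l of (b(k, l-n) - b(k-1, l-n-1)) = ((2m1 + k - l + 1)/(2m1 + k)) * b(k, l-1). -/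
/-- `b^{m1,m2}(k,l) = (-2m1-k)_l (-2m2-l)_k / (k! l!)` for `k,l ≥ 0`, and `0` otherwise. -/
noncomputable def bcoef (m1 m2 : ℚ) (k l : ℤ) : ℚ :=
  if 0 ≤ k ∧ 0 ≤ l then
    (ascPochhammer ℚ l.toNat).eval (-2 * m1 - (k : ℚ)) *
        (ascPochhammer ℚ k.toNat).eval (-2 * m2 - (l : ℚ)) /
      ((Nat.factorial k.toNat : ℚ) * (Nat.factorial l.toNat : ℚ))
  else 0

private lemma poch_succ_left_eval (n : ℕ) (x : ℚ) :
    (ascPochhammer ℚ (n + 1)).eval x = x * (ascPochhammer ℚ n).eval (x + 1) := by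
  rw [ascPochhammer_succ_left, Polynomial.eval_mul, Polynomial.eval_X, Polynomial.eval_comp]
  simp

private lemma poch_diff (n : ℕ) (x : ℚ) :
    (ascPochhammer ℚ (n + 1)).eval x =
      (ascPochhammer ℚ (n + 1)).eval (x + 1) - (n + 1 : ℚ) * (ascPochhammer ℚ n).eval (x + 1) := by
  conv_lhs => rw [poch_succ_left_eval]
  rw [ascPochhammer_succ_eval]
  ring

private lemma bcoef_key (m1 m2 : ℚ) (K L : ℕ) (hne : 2 * m1 + (K : ℚ) ≠ 0) :
    -((L : ℚ) + 1) * bcoef m1 m2 (K : ℤ) ((L : ℤ) + 1) =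
      (2 * m1 + (K : ℚ) - ((L : ℚ) + 1) + 1) * bcoef m1 m2 (K : ℤ) (L : ℤ) -
        (2 * m1 + (K : ℚ)) * bcoef m1 m2 ((K : ℤ) - 1) (L : ℤ) := by
  rcases K with _ | K'
  · rw [bcoef, bcoef, bcoef, if_pos ⟨by omega, by omega⟩, if_pos ⟨by omega, by omega⟩,
      if_neg (by omega)]
    rw [show (((0:ℕ):ℤ)).toNat = 0 from rfl, show (((L:ℤ)+1)).toNat = L+1 from by omega,
      show ((L:ℤ)).toNat = L from by omega]
    push_cast
    rw [ascPochhammer_succ_eval]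
    simp only [ascPochhammer_zero, Polynomial.eval_one, Nat.factorial_zero, Nat.factorial_succ]
    push_cast
    have hfL : ((L.factorial : ℚ)) ≠ 0 := Nat.cast_ne_zero.mpr L.factorial_ne_zero
    field_simp
    ring
  · rw [bcoef, bcoef, bcoef, if_pos ⟨by omega, by omega⟩, if_pos ⟨by omega, by omega⟩,
      if_pos ⟨by omega, by omega⟩]
    rw [show (((K'+1:ℕ):ℤ)).toNat = K'+1 from by omega,
      show (((K'+1:ℕ):ℤ) - 1).toNat = K' from by omega,
      show (((L:ℤ)+1)).toNat = L+1 from by omega,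
      show ((L:ℤ)).toNat = L from by omega]
    push_cast at hne ⊢
    set x : ℚ := -2 * m1 - ((K' : ℚ) + 1) with hxdef
    set y : ℚ := -2 * m2 - (L : ℚ) with hydef
    have hx : x ≠ 0 := by rw [hxdef]; intro h; apply hne; linarith
    have f1 : (ascPochhammer ℚ (L+1)).eval x = (ascPochhammer ℚ L).eval x * (x + L) :=
      ascPochhammer_succ_eval L x
    have f2 : (ascPochhammer ℚ (K'+1)).eval (-2 * m2 - ((L:ℚ) + 1)) =
        (ascPochhammer ℚ (K'+1)).eval y - ((K':ℚ) + 1) * (ascPochhammer ℚ K').eval y := by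
      have h := poch_diff K' (-2 * m2 - ((L:ℚ) + 1))
      rw [show -2 * m2 - ((L:ℚ) + 1) + 1 = y from by rw [hydef]; ring] at h
      exact h
    have f3 : (ascPochhammer ℚ L).eval (-2 * m1 - ((K':ℚ) + 1 - 1)) =
        (x + L) * (ascPochhammer ℚ L).eval x / x := by
      rw [show -2 * m1 - ((K':ℚ) + 1 - 1) = x + 1 from by rw [hxdef]; ring]
      have h1 := poch_succ_left_eval L x
      have h2 := ascPochhammer_succ_eval (S := ℚ) L x
      field_simp
      linear_combination h2 - h1
    rw [f1, f2, f3]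
    rw [Nat.factorial_succ, Nat.factorial_succ]
    push_cast
    have hfL : ((L.factorial : ℚ)) ≠ 0 := Nat.cast_ne_zero.mpr L.factorial_ne_zero
    have hfK : ((K'.factorial : ℚ)) ≠ 0 := Nat.cast_ne_zero.mpr K'.factorial_ne_zero
    have hxx : 2 * m1 + ((K':ℚ) + 1) = -x := by rw [hxdef]; ring
    rw [hxx]
    field_simp
    ring

private lemma sum_reflect (g : ℤ → ℚ) (l : ℤ) :
    ∑ n ∈ Finset.Icc (1 : ℤ) l, g (l - n) = ∑ j ∈ Finset.Icc (0 : ℤ) (l - 1), g j := by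
  refine Finset.sum_nbij' (fun n => l - n) (fun j => l - j) ?_ ?_ ?_ ?_ ?_ <;>
    intros <;> simp_all [Finset.mem_Icc] <;> omega

private lemma aux (m1 m2 : ℚ) (k : ℤ) (hk : 0 ≤ k) (hne : 2 * m1 + (k : ℚ) ≠ 0)
    (l : ℤ) (hl : 1 ≤ l) :
      ∑ j ∈ Finset.Icc (0 : ℤ) (l - 1), (bcoef m1 m2 k j - bcoef m1 m2 (k - 1) (j - 1)) =
        ((2 * m1 + (k : ℚ) - (l : ℚ) + 1) / (2 * m1 + (k : ℚ))) * bcoef m1 m2 k (l - 1) := by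
  lift k to ℕ using hk with K
  push_cast at hne
  obtain ⟨L, rfl⟩ : ∃ L : ℕ, l = (L : ℤ) + 1 := ⟨(l - 1).toNat, by omega⟩
  clear hl
  induction L with
  | zero =>
    rw [show ((0:ℕ):ℤ) + 1 - 1 = 0 from rfl]
    rw [Finset.Icc_self, Finset.sum_singleton]
    have h0 : bcoef m1 m2 ((K:ℤ) - 1) (0 - 1) = 0 := by rw [bcoef, if_neg]; omega
    rw [h0, sub_zero]
    push_cast
    rw [show 2 * m1 + (K : ℚ) - 1 + 1 = 2 * m1 + (K : ℚ) from by ring, div_self hne,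
      one_mul]
  | succ L ih =>
    have hs : Finset.Icc (0:ℤ) (((L+1:ℕ):ℤ) + 1 - 1) =
        insert ((L:ℤ)+1) (Finset.Icc (0:ℤ) (((L:ℕ):ℤ) + 1 - 1)) := by
      ext x; simp only [Finset.mem_Icc, Finset.mem_insert]; omega
    rw [hs, Finset.sum_insert (by simp only [Finset.mem_Icc]; omega), ih]
    have key := bcoef_key m1 m2 K L hne
    rw [show ((L:ℤ)) + 1 - 1 = (L:ℤ) from by ring] at *
    push_cast
    field_simp
    rw [show ((L:ℤ)) + 1 + 1 - 1 = (L:ℤ) + 1 from by ring]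
    linear_combination -key

theorem stmt10 (m1 m2 : ℚ) (k l : ℤ) (hk : 0 ≤ k) (hl : 1 ≤ l)
    (hne : 2 * m1 + (k : ℚ) ≠ 0) :
    ∑ n ∈ Finset.Icc (1 : ℤ) l,
        (bcoef m1 m2 k (l - n) - bcoef m1 m2 (k - 1) (l - n - 1)) =
      ((2 * m1 + (k : ℚ) - (l : ℚ) + 1) / (2 * m1 + (k : ℚ))) * bcoef m1 m2 k (l - 1) := by
  have h := sum_reflect (fun j => bcoef m1 m2 k j - bcoef m1 m2 (k - 1) (j - 1)) l
  rw [show (∑ n ∈ Finset.Icc (1 : ℤ) l,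
      (bcoef m1 m2 k (l - n) - bcoef m1 m2 (k - 1) (l - n - 1))) =
      ∑ n ∈ Finset.Icc (1 : ℤ) l,
      (fun j => bcoef m1 m2 k j - bcoef m1 m2 (k - 1) (j - 1)) (l - n) from rfl, h]
  exact aux m1 m2 k hk hne l hl
end

section
/- Let m1, m2 be rationals and define b(k,l) = (-2m1-k)_l (-2m2-l)_k / (k! l!) for k,l ≥ 0, with b(k,l) = 0 if k < 0 or l < 0. Then for all integers k, l: b^{m1,m2}(k,l-1) - b^{m1,m2}(k-1,l) = b^{m1,m2+1}(k,l-1) - b^{m1,m2+1}(k-1,l-2) - b^{m1+1,m2}(k-1,l) + b^{m1+1,m2}(k-2,l-1), where superscripts indicate the parameter values used in the definition of b. -/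
set_option maxHeartbeats 1000000
lemma poch_left (c : ℚ) (n : ℕ) :
    (ascPochhammer ℚ (n+1)).eval c = c * (ascPochhammer ℚ n).eval (c+1) := by
  rw [ascPochhammer_succ_left]
  simp [Polynomial.eval_comp]

lemma bcoef_nat (m1 m2 : ℚ) (K L : ℕ) :
    bcoef m1 m2 (K : ℤ) (L : ℤ) =
      (ascPochhammer ℚ L).eval (-2 * m1 - (K : ℚ)) *
        (ascPochhammer ℚ K).eval (-2 * m2 - (L : ℚ)) /
      ((Nat.factorial K : ℚ) * (Nat.factorial L : ℚ)) := by
  simp [bcoef]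

lemma bcoef_neg_left (m1 m2 : ℚ) (k l : ℤ) (h : k < 0) : bcoef m1 m2 k l = 0 := by
  rw [bcoef, if_neg]; omega

lemma bcoef_neg_right (m1 m2 : ℚ) (k l : ℤ) (h : l < 0) : bcoef m1 m2 k l = 0 := by
  rw [bcoef, if_neg]; omega

lemma bcoef_m1_irrel (m1 m1' m2 : ℚ) (k : ℤ) : bcoef m1 m2 k 0 = bcoef m1' m2 k 0 := by
  simp [bcoef]

lemma bcoef_m2_irrel (m1 m2 m2' : ℚ) (l : ℤ) : bcoef m1 m2 0 l = bcoef m1 m2' 0 l := by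
  simp [bcoef]

lemma case_k1l1 (m1 m2 : ℚ) :
    bcoef m1 m2 1 0 - bcoef m1 m2 0 1 =
      bcoef m1 (m2+1) 1 0 - bcoef m1 (m2+1) 0 (-1)
        - bcoef (m1+1) m2 0 1 + bcoef (m1+1) m2 (-1) 0 := by
  norm_num [bcoef]
  ring

lemma case_k1 (m1 m2 : ℚ) (L : ℕ) :
    bcoef m1 m2 1 ((L:ℤ)+1) - bcoef m1 m2 0 ((L:ℤ)+2) =
      bcoef m1 (m2+1) 1 ((L:ℤ)+1) - bcoef m1 (m2+1) 0 (L:ℤ)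
        - bcoef (m1+1) m2 0 ((L:ℤ)+2) := by
  rw [show (L:ℤ)+2 = ((L+2:ℕ):ℤ) by push_cast; ring,
      show (L:ℤ)+1 = ((L+1:ℕ):ℤ) by push_cast; ring,
      show (1:ℤ) = ((1:ℕ):ℤ) by norm_num,
      show (0:ℤ) = ((0:ℕ):ℤ) by norm_num,
      show (L:ℤ) = ((L:ℕ):ℤ) from rfl]
  simp only [bcoef_nat, Nat.factorial_succ]
  push_cast
  have e1 : (ascPochhammer ℚ (L+1)).eval (-2*m1 - 1) =
      (-2*m1 - 1) * (ascPochhammer ℚ L).eval (-2*m1) := by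
    rw [poch_left, show -2*m1 - 1 + 1 = -2*m1 by ring]
  have e2 : (ascPochhammer ℚ (L+1+1)).eval (-2*m1 - 0) =
      (ascPochhammer ℚ L).eval (-2*m1) * (-2*m1 + L) * (-2*m1 + L + 1) := by
    rw [ascPochhammer_succ_eval, ascPochhammer_succ_eval, show -2*m1 - 0 = -2*m1 by ring]
    push_cast; ring
  have e4 : (ascPochhammer ℚ L).eval (-2*m1 - 0) = (ascPochhammer ℚ L).eval (-2*m1) := by
    rw [show -2*m1 - 0 = -2*m1 by ring]
  have e5 : (ascPochhammer ℚ (L+1+1)).eval (-2*(m1+1) - 0) =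
      (-2*m1 - 2) * (-2*m1 - 1) * (ascPochhammer ℚ L).eval (-2*m1) := by
    rw [poch_left, poch_left, show -2*(m1+1) - 0 + 1 + 1 = -2*m1 by ring]
    ring
  rw [e1, e2, e4, e5]
  simp only [ascPochhammer_zero, ascPochhammer_one, Polynomial.eval_one, Polynomial.eval_X]
  have hL : ((L.factorial : ℚ)) ≠ 0 := Nat.cast_ne_zero.mpr L.factorial_ne_zero
  have h3 : ((L:ℚ)+1) ≠ 0 := by positivity
  have h4 : ((L:ℚ)+2) ≠ 0 := by positivity
  field_simp
  ring

lemma case_l1 (m1 m2 : ℚ) (K : ℕ) :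
    bcoef m1 m2 ((K:ℤ)+2) 0 - bcoef m1 m2 ((K:ℤ)+1) 1 =
      bcoef m1 (m2+1) ((K:ℤ)+2) 0
        - bcoef (m1+1) m2 ((K:ℤ)+1) 1 + bcoef (m1+1) m2 (K:ℤ) 0 := by
  rw [show (K:ℤ)+2 = ((K+2:ℕ):ℤ) by push_cast; ring,
      show (K:ℤ)+1 = ((K+1:ℕ):ℤ) by push_cast; ring,
      show (1:ℤ) = ((1:ℕ):ℤ) by norm_num,
      show (0:ℤ) = ((0:ℕ):ℤ) by norm_num]
  simp only [bcoef_nat, Nat.factorial_succ]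
  push_cast
  have f1 : (ascPochhammer ℚ (K+1+1)).eval (-2*m2 - 0) =
      (ascPochhammer ℚ K).eval (-2*m2) * (-2*m2 + K) * (-2*m2 + K + 1) := by
    rw [ascPochhammer_succ_eval, ascPochhammer_succ_eval, show -2*m2 - 0 = -2*m2 by ring]
    push_cast; ring
  have f2 : (ascPochhammer ℚ (K+1)).eval (-2*m2 - 1) =
      (-2*m2 - 1) * (ascPochhammer ℚ K).eval (-2*m2) := by
    rw [poch_left, show -2*m2 - 1 + 1 = -2*m2 by ring]
  have f3 : (ascPochhammer ℚ (K+1+1)).eval (-2*(m2+1) - 0) =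
      (-2*m2 - 2) * (-2*m2 - 1) * (ascPochhammer ℚ K).eval (-2*m2) := by
    rw [poch_left, poch_left, show -2*(m2+1) - 0 + 1 + 1 = -2*m2 by ring]
    ring
  have f6 : (ascPochhammer ℚ K).eval (-2*m2 - 0) = (ascPochhammer ℚ K).eval (-2*m2) := by
    rw [show -2*m2 - 0 = -2*m2 by ring]
  rw [f1, f2, f3, f6]
  simp only [ascPochhammer_zero, ascPochhammer_one, Polynomial.eval_one, Polynomial.eval_X]
  have hK : ((K.factorial : ℚ)) ≠ 0 := Nat.cast_ne_zero.mpr K.factorial_ne_zero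
  have h1 : ((K:ℚ)+1) ≠ 0 := by positivity
  have h2 : ((K:ℚ)+2) ≠ 0 := by positivity
  field_simp
  ring

lemma case_gen (m1 m2 : ℚ) (K L : ℕ) :
    bcoef m1 m2 ((K:ℤ)+2) ((L:ℤ)+1) - bcoef m1 m2 ((K:ℤ)+1) ((L:ℤ)+2) =
      bcoef m1 (m2+1) ((K:ℤ)+2) ((L:ℤ)+1) - bcoef m1 (m2+1) ((K:ℤ)+1) (L:ℤ)
        - bcoef (m1+1) m2 ((K:ℤ)+1) ((L:ℤ)+2) + bcoef (m1+1) m2 (K:ℤ) ((L:ℤ)+1) := by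
  rw [show (K:ℤ)+2 = ((K+2:ℕ):ℤ) by push_cast; ring,
      show (K:ℤ)+1 = ((K+1:ℕ):ℤ) by push_cast; ring,
      show (L:ℤ)+2 = ((L+2:ℕ):ℤ) by push_cast; ring,
      show (L:ℤ)+1 = ((L+1:ℕ):ℤ) by push_cast; ring]
  simp only [bcoef_nat, Nat.factorial_succ]
  push_cast
  have e1 : (ascPochhammer ℚ (L+1)).eval (-2*m1 - ((K:ℚ)+2)) =
      (-2*m1 - (K:ℚ) - 2) * (ascPochhammer ℚ L).eval (-2*m1 - (K:ℚ) - 1) := by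
    rw [poch_left, show -2*m1 - ((K:ℚ)+2) + 1 = -2*m1 - (K:ℚ) - 1 by ring]
    ring
  have e2 : (ascPochhammer ℚ (L+1+1)).eval (-2*m1 - ((K:ℚ)+1)) =
      (ascPochhammer ℚ L).eval (-2*m1 - (K:ℚ) - 1) *
        (-2*m1 - (K:ℚ) - 1 + L) * (-2*m1 - (K:ℚ) + L) := by
    rw [ascPochhammer_succ_eval, ascPochhammer_succ_eval,
      show -2*m1 - ((K:ℚ)+1) = -2*m1 - (K:ℚ) - 1 by ring]
    push_cast
    ring
  have e4 : (ascPochhammer ℚ L).eval (-2*m1 - ((K:ℚ)+1)) =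
      (ascPochhammer ℚ L).eval (-2*m1 - (K:ℚ) - 1) := by
    rw [show -2*m1 - ((K:ℚ)+1) = -2*m1 - (K:ℚ) - 1 by ring]
  have e5 : (ascPochhammer ℚ (L+1+1)).eval (-2*(m1+1) - ((K:ℚ)+1)) =
      (-2*m1 - (K:ℚ) - 3) * (-2*m1 - (K:ℚ) - 2) *
        (ascPochhammer ℚ L).eval (-2*m1 - (K:ℚ) - 1) := by
    rw [poch_left, poch_left,
      show -2*(m1+1) - ((K:ℚ)+1) + 1 + 1 = -2*m1 - (K:ℚ) - 1 by ring]
    ring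
  have f1 : (ascPochhammer ℚ (K+1+1)).eval (-2*m2 - ((L:ℚ)+1)) =
      (ascPochhammer ℚ K).eval (-2*m2 - (L:ℚ) - 1) *
        (-2*m2 - (L:ℚ) - 1 + K) * (-2*m2 - (L:ℚ) + K) := by
    rw [ascPochhammer_succ_eval, ascPochhammer_succ_eval,
      show -2*m2 - ((L:ℚ)+1) = -2*m2 - (L:ℚ) - 1 by ring]
    push_cast
    ring
  have f2 : (ascPochhammer ℚ (K+1)).eval (-2*m2 - ((L:ℚ)+2)) =
      (-2*m2 - (L:ℚ) - 2) * (ascPochhammer ℚ K).eval (-2*m2 - (L:ℚ) - 1) := by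
    rw [poch_left, show -2*m2 - ((L:ℚ)+2) + 1 = -2*m2 - (L:ℚ) - 1 by ring]
    ring
  have f3 : (ascPochhammer ℚ (K+1+1)).eval (-2*(m2+1) - ((L:ℚ)+1)) =
      (-2*m2 - (L:ℚ) - 3) * (-2*m2 - (L:ℚ) - 2) *
        (ascPochhammer ℚ K).eval (-2*m2 - (L:ℚ) - 1) := by
    rw [poch_left, poch_left,
      show -2*(m2+1) - ((L:ℚ)+1) + 1 + 1 = -2*m2 - (L:ℚ) - 1 by ring]
    ring
  have f4 : (ascPochhammer ℚ (K+1)).eval (-2*(m2+1) - (L:ℚ)) =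
      (-2*m2 - (L:ℚ) - 2) * (ascPochhammer ℚ K).eval (-2*m2 - (L:ℚ) - 1) := by
    rw [poch_left, show -2*(m2+1) - (L:ℚ) + 1 = -2*m2 - (L:ℚ) - 1 by ring]
    ring
  have f6 : (ascPochhammer ℚ K).eval (-2*m2 - ((L:ℚ)+1)) =
      (ascPochhammer ℚ K).eval (-2*m2 - (L:ℚ) - 1) := by
    rw [show -2*m2 - ((L:ℚ)+1) = -2*m2 - (L:ℚ) - 1 by ring]
  have e6 : (ascPochhammer ℚ (L+1)).eval (-2*(m1+1) - (K:ℚ)) =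
      (-2*m1 - (K:ℚ) - 2) * (ascPochhammer ℚ L).eval (-2*m1 - (K:ℚ) - 1) := by
    rw [poch_left, show -2*(m1+1) - (K:ℚ) + 1 = -2*m1 - (K:ℚ) - 1 by ring]
    ring
  rw [e1, e2, e4, e5, e6, f1, f2, f3, f4, f6]
  have hK : ((K.factorial : ℚ)) ≠ 0 := Nat.cast_ne_zero.mpr K.factorial_ne_zero
  have hL : ((L.factorial : ℚ)) ≠ 0 := Nat.cast_ne_zero.mpr L.factorial_ne_zero
  have h1 : ((K:ℚ)+1) ≠ 0 := by positivity
  have h2 : ((K:ℚ)+2) ≠ 0 := by positivity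
  have h3 : ((L:ℚ)+1) ≠ 0 := by positivity
  have h4 : ((L:ℚ)+2) ≠ 0 := by positivity
  field_simp
  ring


theorem stmt11 (m1 m2 : ℚ) (k l : ℤ) :
    bcoef m1 m2 k (l - 1) - bcoef m1 m2 (k - 1) l =
      bcoef m1 (m2 + 1) k (l - 1) - bcoef m1 (m2 + 1) (k - 1) (l - 2)
        - bcoef (m1 + 1) m2 (k - 1) l + bcoef (m1 + 1) m2 (k - 2) (l - 1) := by
  rcases lt_or_ge k 0 with hk | hk
  · rw [bcoef_neg_left _ _ _ _ hk, bcoef_neg_left _ _ _ _ (by omega),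
        bcoef_neg_left _ _ _ _ hk, bcoef_neg_left _ _ _ _ (by omega),
        bcoef_neg_left _ _ _ _ (by omega), bcoef_neg_left _ _ _ _ (by omega)]
    ring
  rcases lt_or_ge l 1 with hl | hl
  · -- l ≤ 0
    rw [bcoef_neg_right m1 m2 k (l-1) (by omega),
        bcoef_neg_right m1 (m2+1) k (l-1) (by omega),
        bcoef_neg_right m1 (m2+1) (k-1) (l-2) (by omega),
        bcoef_neg_right (m1+1) m2 (k-2) (l-1) (by omega)]
    rcases lt_or_ge l 0 with hl0 | hl0
    · rw [bcoef_neg_right m1 m2 (k-1) l hl0, bcoef_neg_right (m1+1) m2 (k-1) l hl0]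
      ring
    · have hl1 : l = 0 := by omega
      subst hl1
      rw [bcoef_m1_irrel m1 (m1+1) m2 (k-1)]
      ring
  -- k ≥ 0, l ≥ 1
  rcases lt_or_ge k 1 with hk0 | hk1
  · have : k = 0 := by omega
    subst this
    rw [bcoef_neg_left m1 m2 (0-1) l (by omega),
        bcoef_neg_left m1 (m2+1) (0-1) (l-2) (by omega),
        bcoef_neg_left (m1+1) m2 (0-1) l (by omega),
        bcoef_neg_left (m1+1) m2 (0-2) (l-1) (by omega),
        bcoef_m2_irrel m1 m2 (m2+1) (l-1)]
    ring
  rcases lt_or_ge k 2 with hk1' | hk2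
  · have : k = 1 := by omega
    subst this
    rcases lt_or_ge l 2 with hl1 | hl2
    · have : l = 1 := by omega
      subst this
      rw [bcoef_neg_left (m1+1) m2 (1-2) (1-1) (by omega)]
      have h := case_k1l1 m1 m2
      have h0 : bcoef m1 (m2+1) 0 (-1) = 0 := bcoef_neg_right _ _ _ _ (by omega)
      have h1 : bcoef (m1+1) m2 (-1) 0 = 0 := bcoef_neg_left _ _ _ _ (by omega)
      rw [show (1:ℤ)-1 = 0 by ring, show (1:ℤ)-2 = -1 by ring]
      linarith [h, h0, h1]
    · obtain ⟨L, rfl⟩ : ∃ L : ℕ, l = (L:ℤ)+2 := ⟨(l-2).toNat, by omega⟩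
      rw [bcoef_neg_left (m1+1) m2 (1-2) ((L:ℤ)+2-1) (by omega)]
      rw [show ((L:ℤ)+2-1) = (L:ℤ)+1 by ring, show ((L:ℤ)+2-2) = (L:ℤ) by ring,
          show ((1:ℤ)-1) = 0 by ring]
      have h := case_k1 m1 m2 L
      linarith [h]
  -- k ≥ 2
  obtain ⟨K, rfl⟩ : ∃ K : ℕ, k = (K:ℤ)+2 := ⟨(k-2).toNat, by omega⟩
  rw [show ((K:ℤ)+2-1) = (K:ℤ)+1 by ring, show ((K:ℤ)+2-2) = (K:ℤ) by ring]
  rcases lt_or_ge l 2 with hl1 | hl2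
  · have : l = 1 := by omega
    subst this
    rw [bcoef_neg_right m1 (m2+1) ((K:ℤ)+1) (1-2) (by omega)]
    rw [show ((1:ℤ)-1) = 0 by ring]
    have h := case_l1 m1 m2 K
    linarith [h]
  · obtain ⟨L, rfl⟩ : ∃ L : ℕ, l = (L:ℤ)+2 := ⟨(l-2).toNat, by omega⟩
    rw [show ((L:ℤ)+2-1) = (L:ℤ)+1 by ring, show ((L:ℤ)+2-2) = (L:ℤ) by ring]
    exact case_gen m1 m2 K L
end
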